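/- arXiv:2302.02451 — 2 statements merged into one kernel-verified Lean document; each statement's English description precedes it below -/
import Mathlib

section
/- Let X ∈ ℝ^{n×q} and Y ∈ ℝ^{n×d} be nonzero matrices with rows x_i and y_i, let γ := ‖X‖_op²/‖Y‖_op², and suppose the positive reals {p_i}_{i∈[n]} satisfy p_i ≥ (1/4)·(‖x_i‖₂² + γ‖y_i‖₂²)/(‖X‖_F² + γ‖Y‖_F²) for all i ∈ [n]. Then in the Loewner (positive semidefinite) order, Σ_{i∈[n]} (‖x_i‖₂²/p_i)·y_iᵀy_i ⪯ 4·(‖X‖_F² + γ‖Y‖_F²)·YᵀY. -/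
/-!
Writing `c i := ‖x_i‖² / p_i` and `C := ‖X‖_F² + γ‖Y‖_F²`, the sampling condition alone gives
`c i ≤ 4C` (drop the nonnegative term `γ‖y_i‖²`). Since `YᵀY = ∑ᵢ y_iᵀ y_i`, the difference
`4C · YᵀY - ∑ᵢ c i · y_iᵀ y_i = ∑ᵢ (4C - c i) · y_iᵀ y_i` is a nonnegative combination of
positive semidefinite rank-one matrices.
-/

/-- The spectral (operator) norm of a real matrix. -/
noncomputable def opNorm {m n : ℕ} (M : Matrix (Fin m) (Fin n) ℝ) : ℝ :=
  ‖LinearMap.toContinuousLinearMap (Matrix.toEuclideanLin M)‖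

/-- The Frobenius norm of a real matrix. -/
noncomputable def frobNorm {m n : ℕ} (M : Matrix (Fin m) (Fin n) ℝ) : ℝ :=
  Real.sqrt (∑ i, ∑ j, (M i j) ^ 2)

open Matrix

theorem Matrix.transpose_mul_self_eq_sum_vecMulVec {m n R : Type*} [Fintype m] [CommSemiring R]
    (Y : Matrix m n R) : Yᵀ * Y = ∑ i, vecMulVec (Y i) (Y i) := by
  ext j k
  simp [mul_apply, vecMulVec_apply, sum_apply]

theorem Matrix.posSemidef_sum_smul_vecMulVec_self {ι n R : Type*} [Fintype ι] [Fintype n]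
    [CommRing R] [PartialOrder R] [IsOrderedRing R] [StarRing R] [TrivialStar R]
    [StarOrderedRing R] {c : ι → R} (hc : ∀ i, 0 ≤ c i) (v : ι → n → R) :
    (∑ i, c i • vecMulVec (v i) (v i)).PosSemidef :=
  posSemidef_sum _ fun i _ => by
    simpa using (posSemidef_vecMulVec_self_star (v i)).smul (hc i)

theorem Matrix.posSemidef_smul_transpose_mul_self_sub_sum {m n R : Type*} [Fintype m] [Fintype n]
    [CommRing R] [PartialOrder R] [IsOrderedRing R] [StarRing R] [TrivialStar R]
    [StarOrderedRing R] (Y : Matrix m n R) {K : R} {c : m → R} (hc : ∀ i, c i ≤ K) :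
    (K • (Yᵀ * Y) - ∑ i, c i • vecMulVec (Y i) (Y i)).PosSemidef := by
  rw [transpose_mul_self_eq_sum_vecMulVec, Finset.smul_sum, ← Finset.sum_sub_distrib]
  simp_rw [← sub_smul]
  exact posSemidef_sum_smul_vecMulVec_self (fun i => sub_nonneg.2 (hc i)) Y

theorem frobNorm_pos {m n : ℕ} {M : Matrix (Fin m) (Fin n) ℝ} (hM : M ≠ 0) : 0 < frobNorm M := by
  refine Real.sqrt_pos.2 (lt_of_le_of_ne (by positivity) fun h => hM ?_)
  have hrows := (Fintype.sum_eq_zero_iff_of_nonneg fun i => by positivity).1 h.symm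
  ext i j
  have hrow := (Fintype.sum_eq_zero_iff_of_nonneg fun j => sq_nonneg (M i j)).1 (congrFun hrows i)
  simpa using congrFun hrow j

theorem div_le_four_mul_of_quarter_add_div_le {a b C p : ℝ} (hb : 0 ≤ b) (hC : 0 < C)
    (hp : 0 < p) (h : 1 / 4 * ((a + b) / C) ≤ p) : a / p ≤ 4 * C := by
  have h' : (a + b) / C ≤ 4 * p := by linarith
  rw [div_le_iff₀ hC] at h'
  rw [div_le_iff₀ hp]
  linarith

theorem amm_second_moment_loewner_general {n q d : ℕ}
    (X : Matrix (Fin n) (Fin q) ℝ) (Y : Matrix (Fin n) (Fin d) ℝ)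
    (hX : X ≠ 0)
    (p : Fin n → ℝ) (hp : ∀ i, 0 < p i)
    (hplb : ∀ i,
      (1 / 4) * (((∑ j, (X i j) ^ 2) +
          (opNorm X ^ 2 / opNorm Y ^ 2) * ∑ j, (Y i j) ^ 2) /
        (frobNorm X ^ 2 + (opNorm X ^ 2 / opNorm Y ^ 2) * frobNorm Y ^ 2)) ≤ p i) :
    Matrix.PosSemidef
      ((4 * (frobNorm X ^ 2 + (opNorm X ^ 2 / opNorm Y ^ 2) * frobNorm Y ^ 2)) •
          (Y.transpose * Y) -
        ∑ i : Fin n, ((∑ j, (X i j) ^ 2) / p i) • Matrix.vecMulVec (Y i) (Y i)) := by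
  have hC : 0 < frobNorm X ^ 2 + (opNorm X ^ 2 / opNorm Y ^ 2) * frobNorm Y ^ 2 := by
    have := frobNorm_pos hX
    positivity
  exact posSemidef_smul_transpose_mul_self_sub_sum Y fun i =>
    div_le_four_mul_of_quarter_add_div_le (by positivity) hC (hp i) (hplb i)

/-- Under the importance-sampling condition p_i ≥ (1/4)(‖x_i‖² + γ‖y_i‖²)/(‖X‖_F² + γ‖Y‖_F²)
with γ = ‖X‖_op²/‖Y‖_op², the second-moment matrix Σᵢ (‖x_i‖²/p_i)·y_iᵀy_i is bounded in
the Loewner order by 4(‖X‖_F² + γ‖Y‖_F²)·YᵀY. -/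
theorem amm_second_moment_loewner {n q d : ℕ}
    (X : Matrix (Fin n) (Fin q) ℝ) (Y : Matrix (Fin n) (Fin d) ℝ)
    (hX : X ≠ 0) (hY : Y ≠ 0)
    (p : Fin n → ℝ) (hp : ∀ i, 0 < p i)
    (hplb : ∀ i,
      (1 / 4) * (((∑ j, (X i j) ^ 2) +
          (opNorm X ^ 2 / opNorm Y ^ 2) * ∑ j, (Y i j) ^ 2) /
        (frobNorm X ^ 2 + (opNorm X ^ 2 / opNorm Y ^ 2) * frobNorm Y ^ 2)) ≤ p i) :
    Matrix.PosSemidef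
      ((4 * (frobNorm X ^ 2 + (opNorm X ^ 2 / opNorm Y ^ 2) * frobNorm Y ^ 2)) •
          (Y.transpose * Y) -
        ∑ i : Fin n, ((∑ j, (X i j) ^ 2) / p i) • Matrix.vecMulVec (Y i) (Y i)) :=
  amm_second_moment_loewner_general X Y hX p hp hplb
end

section
/- Let X ∈ ℝ^{n×q} and Y ∈ ℝ^{n×d} be nonzero matrices with rows x_i and y_i, let γ := ‖X‖_op²/‖Y‖_op², and suppose the positive reals {p_i}_{i∈[n]} satisfy p_i ≥ (1/4)·(‖x_i‖₂² + γ‖y_i‖₂²)/(‖X‖_F² + γ‖Y‖_F²) for all i ∈ [n]. Then max{ ‖Σ_{i∈[n]} (‖x_i‖₂²/p_i)·y_iᵀy_i‖_op , ‖Σ_{i∈[n]} (‖y_i‖₂²/p_i)·x_iᵀx_i‖_op } ≤ 4·‖X‖_op²·‖Y‖_op²·(srank(X) + srank(Y)). -/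
/-- The stable rank ‖M‖_F² / ‖M‖_op². -/
noncomputable def srank {m n : ℕ} (M : Matrix (Fin m) (Fin n) ℝ) : ℝ :=
  frobNorm M ^ 2 / opNorm M ^ 2

open Matrix
open scoped Matrix.Norms.L2Operator

lemma opNorm_eq_norm {m n : ℕ} (M : Matrix (Fin m) (Fin n) ℝ) : opNorm M = ‖M‖ := rfl

lemma opNorm_pos {m n : ℕ} {M : Matrix (Fin m) (Fin n) ℝ} (h : M ≠ 0) : 0 < opNorm M := by
  rw [opNorm_eq_norm]; exact norm_pos_iff.mpr h

lemma frobNorm_sq {m n : ℕ} (M : Matrix (Fin m) (Fin n) ℝ) :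
    frobNorm M ^ 2 = ∑ i, ∑ j, (M i j) ^ 2 := by
  rw [frobNorm, Real.sq_sqrt]
  positivity

lemma frobNorm_sq_pos {m n : ℕ} {M : Matrix (Fin m) (Fin n) ℝ} (h : M ≠ 0) :
    0 < frobNorm M ^ 2 := by
  rw [frobNorm_sq]
  obtain ⟨i, j, hij⟩ : ∃ i j, M i j ≠ 0 := by
    by_contra hc
    push_neg at hc
    exact h (by ext i j; exact hc i j)
  have h1 : 0 < (M i j) ^ 2 := by positivity
  have h2 : (M i j) ^ 2 ≤ ∑ j', (M i j') ^ 2 :=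
    Finset.single_le_sum (f := fun j' => (M i j') ^ 2) (fun k _ => sq_nonneg _)
      (Finset.mem_univ j)
  have h3 : ∑ j', (M i j') ^ 2 ≤ ∑ i', ∑ j', (M i' j') ^ 2 :=
    Finset.single_le_sum (f := fun i' => ∑ j', (M i' j') ^ 2)
      (fun k _ => Finset.sum_nonneg fun _ _ => sq_nonneg _) (Finset.mem_univ i)
  linarith

lemma l2_norm_diagonal_le {n : ℕ} (c : Fin n → ℝ) {C : ℝ} (hC : 0 ≤ C)
    (h : ∀ i, |c i| ≤ C) : ‖Matrix.diagonal c‖ ≤ C := by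
  rw [Matrix.l2_opNorm_def]
  refine ContinuousLinearMap.opNorm_le_bound _ hC fun x => ?_
  have hx : ∀ (v : EuclideanSpace ℝ (Fin n)), ‖v‖ = Real.sqrt (∑ i, (v i) ^ 2) := by
    intro v
    rw [EuclideanSpace.norm_eq]
    congr 1
    exact Finset.sum_congr rfl fun i _ => by rw [Real.norm_eq_abs, sq_abs]
  simp only [LinearEquiv.trans_apply, LinearMap.coe_toContinuousLinearMap']
  rw [hx, hx]
  have happ : ∀ i, (Matrix.toEuclideanLin (Matrix.diagonal c) x) i = c i * x i := by
    intro i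
    rw [Matrix.toEuclideanLin_apply]
    simp [Matrix.mulVec_diagonal]
  have : C * Real.sqrt (∑ i, (x i) ^ 2) = Real.sqrt (C ^ 2 * ∑ i, (x i) ^ 2) := by
    rw [Real.sqrt_mul (sq_nonneg C), Real.sqrt_sq hC]
  rw [this]
  apply Real.sqrt_le_sqrt
  rw [Finset.mul_sum]
  apply Finset.sum_le_sum
  intro i _
  rw [happ i, mul_pow]
  have hci : c i ^ 2 ≤ C ^ 2 := by
    rw [← sq_abs]
    exact pow_le_pow_left₀ (abs_nonneg _) (h i) 2
  nlinarith [sq_nonneg (x i)]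

lemma sum_smul_vecMulVec {n d : ℕ} (c : Fin n → ℝ) (Y : Matrix (Fin n) (Fin d) ℝ) :
    ∑ i, c i • Matrix.vecMulVec (Y i) (Y i) = Yᵀ * Matrix.diagonal c * Y := by
  ext a b
  rw [Matrix.mul_assoc]
  simp only [Matrix.sum_apply, Matrix.smul_apply, Matrix.vecMulVec_apply, Matrix.mul_apply,
    Matrix.diagonal_apply, Matrix.transpose_apply, smul_eq_mul, ite_mul, zero_mul,
    Finset.sum_ite_eq, Finset.mem_univ, if_true]
  exact Finset.sum_congr rfl fun i _ => by ring

lemma key_bound {n d : ℕ} (c : Fin n → ℝ) {C : ℝ} (hC : 0 ≤ C)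
    (hc0 : ∀ i, 0 ≤ c i) (hcC : ∀ i, c i ≤ C) (Y : Matrix (Fin n) (Fin d) ℝ) :
    opNorm (∑ i, c i • Matrix.vecMulVec (Y i) (Y i)) ≤ C * opNorm Y ^ 2 := by
  rw [opNorm_eq_norm, sum_smul_vecMulVec, opNorm_eq_norm]
  have hT : Yᵀ = Yᴴ := by ext i j; simp [Matrix.conjTranspose_apply]
  have hD : ‖Matrix.diagonal c‖ ≤ C :=
    l2_norm_diagonal_le c hC fun i => by rw [abs_of_nonneg (hc0 i)]; exact hcC i
  calc ‖Yᵀ * Matrix.diagonal c * Y‖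
      ≤ ‖Yᵀ * Matrix.diagonal c‖ * ‖Y‖ := Matrix.l2_opNorm_mul _ _
    _ ≤ (‖Yᵀ‖ * ‖Matrix.diagonal c‖) * ‖Y‖ :=
        mul_le_mul_of_nonneg_right (Matrix.l2_opNorm_mul _ _) (norm_nonneg _)
    _ ≤ (‖Yᵀ‖ * C) * ‖Y‖ := by
        apply mul_le_mul_of_nonneg_right _ (norm_nonneg _)
        exact mul_le_mul_of_nonneg_left hD (norm_nonneg _)
    _ = C * ‖Y‖ ^ 2 := by
        rw [hT, Matrix.l2_opNorm_conjTranspose]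
        ring

/-- Under the importance-sampling condition p_i ≥ (1/4)(‖x_i‖² + γ‖y_i‖²)/(‖X‖_F² + γ‖Y‖_F²)
with γ = ‖X‖_op²/‖Y‖_op², the per-sample second moment
max{‖Σᵢ(‖x_i‖²/p_i)·y_iᵀy_i‖_op, ‖Σᵢ(‖y_i‖²/p_i)·x_iᵀx_i‖_op} is at most
4‖X‖_op²‖Y‖_op²(srank X + srank Y). -/
theorem amm_second_moment_opNorm_bound {n q d : ℕ}
    (X : Matrix (Fin n) (Fin q) ℝ) (Y : Matrix (Fin n) (Fin d) ℝ)
    (hX : X ≠ 0) (hY : Y ≠ 0)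
    (p : Fin n → ℝ) (hp : ∀ i, 0 < p i)
    (hplb : ∀ i,
      (1 / 4) * (((∑ j, (X i j) ^ 2) +
          (opNorm X ^ 2 / opNorm Y ^ 2) * ∑ j, (Y i j) ^ 2) /
        (frobNorm X ^ 2 + (opNorm X ^ 2 / opNorm Y ^ 2) * frobNorm Y ^ 2)) ≤ p i) :
    max (opNorm (∑ i : Fin n, ((∑ j, (X i j) ^ 2) / p i) • Matrix.vecMulVec (Y i) (Y i)))
        (opNorm (∑ i : Fin n, ((∑ j, (Y i j) ^ 2) / p i) • Matrix.vecMulVec (X i) (X i))) ≤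
      4 * opNorm X ^ 2 * opNorm Y ^ 2 * (srank X + srank Y) := by
  have hOX : 0 < opNorm X := opNorm_pos hX
  have hOY : 0 < opNorm Y := opNorm_pos hY
  set γ : ℝ := opNorm X ^ 2 / opNorm Y ^ 2 with hγdef
  have hγ : 0 < γ := by positivity
  set S : ℝ := frobNorm X ^ 2 + γ * frobNorm Y ^ 2 with hSdef
  have hFX : 0 < frobNorm X ^ 2 := frobNorm_sq_pos hX
  have hFY : 0 < frobNorm Y ^ 2 := frobNorm_sq_pos hY
  have hS : 0 < S := by have := hγ.le; nlinarith
  -- the common key estimate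
  have hmain : ∀ i, (∑ j, (X i j) ^ 2) + γ * ∑ j, (Y i j) ^ 2 ≤ 4 * S * p i := by
    intro i
    have h1 := hplb i
    rw [one_div, inv_mul_le_iff₀ (by norm_num : (0:ℝ) < 4), div_le_iff₀ hS] at h1
    nlinarith
  have hcX0 : ∀ i, (0:ℝ) ≤ ∑ j, (X i j) ^ 2 := fun i => Finset.sum_nonneg fun _ _ => sq_nonneg _
  have hcY0 : ∀ i, (0:ℝ) ≤ ∑ j, (Y i j) ^ 2 := fun i => Finset.sum_nonneg fun _ _ => sq_nonneg _
  -- first bound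
  have hb1 : opNorm (∑ i : Fin n, ((∑ j, (X i j) ^ 2) / p i) • Matrix.vecMulVec (Y i) (Y i))
      ≤ (4 * S) * opNorm Y ^ 2 := by
    apply key_bound _ (by positivity)
    · intro i; exact div_nonneg (hcX0 i) (hp i).le
    · intro i
      rw [div_le_iff₀ (hp i)]
      have h2 : 0 ≤ γ * ∑ j, (Y i j) ^ 2 := mul_nonneg hγ.le (hcY0 i)
      have := hmain i
      linarith
  -- second bound
  have hb2 : opNorm (∑ i : Fin n, ((∑ j, (Y i j) ^ 2) / p i) • Matrix.vecMulVec (X i) (X i))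
      ≤ (4 * S / γ) * opNorm X ^ 2 := by
    apply key_bound _ (by positivity)
    · intro i; exact div_nonneg (hcY0 i) (hp i).le
    · intro i
      rw [div_le_div_iff₀ (hp i) hγ]
      have := hmain i
      have h2 := hcX0 i
      nlinarith
  -- both right-hand sides equal the claimed bound
  have hrhs : 4 * opNorm X ^ 2 * opNorm Y ^ 2 * (srank X + srank Y)
      = (4 * S) * opNorm Y ^ 2 := by
    rw [srank, srank, hSdef, hγdef]
    field_simp
  have hrhs2 : (4 * S / γ) * opNorm X ^ 2 = (4 * S) * opNorm Y ^ 2 := by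
    rw [hγdef]
    field_simp
  rw [hrhs]
  exact max_le hb1 (by rw [← hrhs2]; exact hb2)
end
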